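/- Let V be a nonzero proper linear subspace of span{e₀, e₁} and let g ∈ H²_V be outer. Then the set {p·g : p an analytic polynomial whose coefficient of e₁ is zero} is dense in H²_V; that is, multiples of g by (boundary values of) elements of the Neil algebra are dense in H²_V. -/

import Mathlib

noncomputable section

open MeasureTheory Complex
open scoped ComplexConjugate

namespace NeilToeplitz

instance fact_two_pi_pos : Fact (0 < 2 * Real.pi) := ⟨by positivity⟩

/-- The circle group `ℝ / 2πℤ`. -/
abbrev 𝕋 : Type := AddCircle (2 * Real.pi)

/-- Normalized arclength (Haar probability) measure on the circle. -/
abbrev μ : Measure 𝕋 := AddCircle.haarAddCircle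

/-- The Lebesgue space `L²(𝕋)`. -/
abbrev L2 : Type := Lp ℂ 2 μ

/-- The exponential `e_n(e^{it}) = e^{int}` as an element of `L²(𝕋)`. -/
def e (n : ℤ) : L2 := fourierLp 2 n

/-- The Hardy space `H²`, the closed linear span of `{e_n : n ≥ 0}` in `L²(𝕋)`. -/
def H2 : Submodule ℂ L2 :=
  (Submodule.span ℂ (Set.range fun n : ℕ => e (n : ℤ))).topologicalClosure

/-- The space `H²_V = H² ∩ V^⊥`. -/
def H2V (V : Submodule ℂ L2) : Submodule ℂ L2 := H2 ⊓ Vᗮ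

lemma isClosed_H2V (V : Submodule ℂ L2) : IsClosed ((H2V V : Set L2)) := by
  have h1 : IsClosed ((H2 : Set L2)) := Submodule.isClosed_topologicalClosure _
  have h2 : IsClosed ((Vᗮ : Set L2)) := Submodule.isClosed_orthogonal V
  simpa [H2V] using h1.inter h2

instance (V : Submodule ℂ L2) : CompleteSpace (H2V V) :=
  (isClosed_H2V V).completeSpace_coe

/-- A bounded (a.e.) measurable function times an `L²` function is in `L²`. -/
lemma memLp_bdd_mul {φ : 𝕋 → ℂ} (hφ : AEStronglyMeasurable φ μ) (C : ℝ)
    (hC : ∀ᵐ x ∂μ, ‖φ x‖ ≤ C) (g : L2) :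
    MemLp (fun x => φ x * g x) 2 μ := by
  refine MemLp.of_le_mul (c := C) (Lp.memLp g) (hφ.mul (Lp.aestronglyMeasurable g)) ?_
  filter_upwards [hC] with x hx
  rw [norm_mul]
  exact mul_le_mul_of_nonneg_right hx (norm_nonneg _)

/-- Multiplication of `g ∈ L²` by a real-valued bounded measurable symbol `φ`. -/
def phiMul (φ : 𝕋 → ℝ) (hφ : Measurable φ) {C : ℝ} (hC : ∀ x, |φ x| ≤ C) (g : L2) : L2 :=
  (memLp_bdd_mul ((Complex.measurable_ofReal.comp hφ).aestronglyMeasurable) C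
    (Filter.Eventually.of_forall fun x => by simpa using hC x) g).toLp _

/-- The Toeplitz operator `T_φ^V : H²_V → H²_V`, `g ↦ P_V (φ · g)`. -/
def toeplitz (φ : 𝕋 → ℝ) (hφ : Measurable φ) {C : ℝ} (hC : ∀ x, |φ x| ≤ C)
    (V : Submodule ℂ L2) (g : H2V V) : H2V V :=
  (H2V V).orthogonalProjectionOnto (phiMul φ hφ hC (g : L2))

/-- Multiplication of `g ∈ L²` by the exponential `e_n`. -/
def mulFourier (n : ℤ) (g : L2) : L2 :=
  (memLp_bdd_mul (map_continuous (fourier n)).aestronglyMeasurable 1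
    (Filter.Eventually.of_forall fun x => le_of_eq (Circle.norm_coe _)) g).toLp _

/-- `g` is outer: the analytic-polynomial multiples of `g` are dense in `H²`. -/
def Outer (g : L2) : Prop :=
  (Submodule.span ℂ (Set.range fun n : ℕ => mulFourier (n : ℤ) g)).topologicalClosure = H2

/-- `lam` is an eigenvalue of `φ` relative to the Neil algebra. -/
def IsEigenvalueRelNeil (φ : 𝕋 → ℝ) (hφ : Measurable φ) {C : ℝ} (hC : ∀ x, |φ x| ≤ C)
    (lam : ℝ) : Prop :=
  ∃ V : Submodule ℂ L2, V ≤ Submodule.span ℂ {e 0, e 1} ∧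
    ∃ g : H2V V, g ≠ 0 ∧ toeplitz φ hφ hC V g = (lam : ℂ) • g

end NeilToeplitz

/-!
Let `M` be the closed span of the `e_n g`, `n ≠ 1`. Outerness gives `M ≤ H²`, and `M ⊥ V` since
`⟪e_k, e_n g⟫ = ⟪e_{k-n}, g⟫` vanishes for `k ∈ {0, 1}`, `n ≥ 2`. Conversely, outerness gives
`H² ⊆ M + ℂ e₁g` (the right side is closed, `M` being closed). Since `⟪e₀, g⟫ ≠ 0` and `g ⊥ V`,
`V` contains some `v = a e₀ + b e₁` with `b ≠ 0`, so `⟪v, e₁g⟫ = b̄ ⟪e₀, g⟫ ≠ 0`; hence for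
`h = m + c e₁g ∈ H²_V`, orthogonality to `v` forces `c = 0`.
-/

section ClosedSup

variable {𝕜 E : Type*} [NontriviallyNormedField 𝕜] [CompleteSpace 𝕜]
  [AddCommGroup E] [TopologicalSpace E] [IsTopologicalAddGroup E] [Module 𝕜 E]
  [ContinuousSMul 𝕜 E]

theorem Submodule.topologicalClosure_span_insert_le (s : Set E) (u : E) :
    (Submodule.span 𝕜 (insert u s)).topologicalClosure
      ≤ (Submodule.span 𝕜 s).topologicalClosure ⊔ Submodule.span 𝕜 {u} := by
  refine Submodule.topologicalClosure_minimal _ ?_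
    (Submodule.isClosed_sup_finiteDimensional _ _ (Submodule.isClosed_topologicalClosure _))
  rw [Submodule.span_insert, sup_comm]
  exact sup_le_sup_right (Submodule.le_topologicalClosure _) _

end ClosedSup

namespace NeilToeplitz

open scoped InnerProductSpace

lemma coeFn_mulFourier (n : ℤ) (g : L2) :
    (mulFourier n g : 𝕋 → ℂ) =ᵐ[μ] fun x => fourier n x * g x :=
  MemLp.coeFn_toLp _

lemma mulFourier_zero (g : L2) : mulFourier 0 g = g := by
  refine Lp.ext ?_
  filter_upwards [coeFn_mulFourier 0 g] with x hx
  simp [hx]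

lemma inner_e_mulFourier (k n : ℤ) (g : L2) :
    ⟪e k, mulFourier n g⟫_ℂ = ⟪e (k - n), g⟫_ℂ := by
  rw [MeasureTheory.L2.inner_def, MeasureTheory.L2.inner_def]
  refine integral_congr_ae ?_
  filter_upwards [coeFn_fourierLp (T := 2 * Real.pi) 2 k,
    coeFn_fourierLp (T := 2 * Real.pi) 2 (k - n), coeFn_mulFourier n g] with x h1 h2 h3
  simp only [e, h1, h2, h3, RCLike.inner_apply]
  rw [← fourier_neg, ← fourier_neg, mul_comm ((fourier n) x), mul_assoc, ← fourier_add]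
  ring_nf

lemma inner_e_e (m n : ℤ) : ⟪e m, e n⟫_ℂ = if m = n then (1 : ℂ) else 0 := by
  simpa [e] using orthonormal_iff_ite.mp (orthonormal_fourier (T := 2 * Real.pi)) m n

lemma e_mem_H2 (n : ℕ) : e (n : ℤ) ∈ H2 :=
  Submodule.le_topologicalClosure _ (Submodule.subset_span ⟨n, rfl⟩)

lemma inner_e_eq_zero_of_mem_H2 {k : ℤ} (hk : k < 0) {g : L2} (hg : g ∈ H2) :
    ⟪e k, g⟫_ℂ = 0 := by
  have hker : H2 ≤ (innerSL ℂ (e k)).ker := by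
    refine Submodule.topologicalClosure_minimal _ ?_ (innerSL ℂ (e k)).isClosed_ker
    rw [Submodule.span_le]
    rintro _ ⟨n, rfl⟩
    simp only [SetLike.mem_coe, LinearMap.mem_ker, ContinuousLinearMap.coe_coe,
      innerSL_apply_apply, inner_e_e]
    rw [if_neg (by omega)]
  simpa using hker hg

/-- If `⟪e 0, g⟫ = 0` then every analytic-polynomial multiple of `g` is orthogonal to `e 0`,
which is itself in `H²`. -/
lemma Outer.inner_e_zero_ne_zero {g : L2} (hg : g ∈ H2) (hout : Outer g) :
    ⟪e 0, g⟫_ℂ ≠ 0 := by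
  intro h0
  have hker : H2 ≤ (innerSL ℂ (e 0)).ker := by
    rw [← hout]
    refine Submodule.topologicalClosure_minimal _ ?_ (innerSL ℂ (e 0)).isClosed_ker
    rw [Submodule.span_le]
    rintro _ ⟨n, rfl⟩
    simp only [SetLike.mem_coe, LinearMap.mem_ker, ContinuousLinearMap.coe_coe,
      innerSL_apply_apply, inner_e_mulFourier]
    rcases Nat.eq_zero_or_pos n with rfl | hn
    · simpa using h0
    · exact inner_e_eq_zero_of_mem_H2 (by omega) hg
  have h00 := hker (e_mem_H2 0)
  simp only [LinearMap.mem_ker, ContinuousLinearMap.coe_coe, innerSL_apply_apply, inner_e_e] at h00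
  exact one_ne_zero h00

lemma inner_pair_mulFourier_one {g : L2} (hg : g ∈ H2) (a b : ℂ) :
    ⟪a • e 0 + b • e 1, mulFourier 1 g⟫_ℂ = conj b * ⟪e 0, g⟫_ℂ := by
  rw [inner_add_left, inner_smul_left, inner_smul_left, inner_e_mulFourier, inner_e_mulFourier,
    inner_e_eq_zero_of_mem_H2 (by norm_num) hg, sub_self]
  ring

lemma mulFourier_mem_orthogonal {V : Submodule ℂ L2} (hV : V ≤ Submodule.span ℂ {e 0, e 1})
    {g : L2} (hg : g ∈ H2V V) {n : ℕ} (hn : n ≠ 1) : mulFourier (n : ℤ) g ∈ Vᗮ := by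
  rcases Nat.eq_zero_or_pos n with rfl | hpos
  · simpa [mulFourier_zero] using hg.2
  rw [Submodule.mem_orthogonal]
  intro w hw
  obtain ⟨a, b, rfl⟩ := Submodule.mem_span_pair.mp (hV hw)
  rw [inner_add_left, inner_smul_left, inner_smul_left, inner_e_mulFourier, inner_e_mulFourier,
    inner_e_eq_zero_of_mem_H2 (by omega) hg.1, inner_e_eq_zero_of_mem_H2 (by omega) hg.1]
  ring

/-- The witness has nonzero `e 1`-coordinate: `e 0 ∉ V` because `⟪e 0, g⟫ ≠ 0` and `g ⊥ V`. -/
lemma exists_inner_mulFourier_one_ne_zero {V : Submodule ℂ L2}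
    (hV : V ≤ Submodule.span ℂ {e 0, e 1}) (hVne : V ≠ ⊥) {g : L2} (hg : g ∈ H2V V)
    (hout : Outer g) : ∃ v ∈ V, ⟪v, mulFourier 1 g⟫_ℂ ≠ 0 := by
  have hg0 := hout.inner_e_zero_ne_zero hg.1
  obtain ⟨v, hvV, hv0⟩ := Submodule.exists_mem_ne_zero_of_ne_bot hVne
  obtain ⟨a, b, rfl⟩ := Submodule.mem_span_pair.mp (hV hvV)
  refine ⟨_, hvV, ?_⟩
  rw [inner_pair_mulFourier_one hg.1]
  refine mul_ne_zero (fun hb => ?_) hg0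
  rw [map_eq_zero_iff _ (RingHom.injective _)] at hb
  subst hb
  have hvg := Submodule.inner_right_of_mem_orthogonal hvV hg.2
  rw [zero_smul, add_zero] at hvg hv0
  rw [inner_smul_left] at hvg
  exact hg0 ((mul_eq_zero.mp hvg).resolve_left (by simpa using left_ne_zero_of_smul hv0))

/-- The closed span of the multiples of `g` by the Neil algebra `{f : f'(0) = 0}`. -/
def neilMultiples (g : L2) : Submodule ℂ L2 :=
  (Submodule.span ℂ {x : L2 | ∃ n : ℕ, n ≠ 1 ∧ x = mulFourier (n : ℤ) g}).topologicalClosure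

lemma neilMultiples_le_H2 {g : L2} (hout : Outer g) : neilMultiples g ≤ H2 := by
  rw [← hout]
  refine Submodule.topologicalClosure_mono (Submodule.span_mono ?_)
  rintro _ ⟨n, -, rfl⟩
  exact ⟨n, rfl⟩

lemma neilMultiples_le_orthogonal {V : Submodule ℂ L2} (hV : V ≤ Submodule.span ℂ {e 0, e 1})
    {g : L2} (hg : g ∈ H2V V) : neilMultiples g ≤ Vᗮ := by
  refine Submodule.topologicalClosure_minimal _ ?_ (Submodule.isClosed_orthogonal V)
  rw [Submodule.span_le]
  rintro _ ⟨n, hn, rfl⟩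
  exact mulFourier_mem_orthogonal hV hg hn

lemma H2_le_neilMultiples_sup {g : L2} (hout : Outer g) :
    H2 ≤ neilMultiples g ⊔ Submodule.span ℂ {mulFourier 1 g} := by
  rw [← hout]
  refine (Submodule.topologicalClosure_mono (Submodule.span_mono ?_)).trans
    (Submodule.topologicalClosure_span_insert_le _ _)
  rintro _ ⟨n, rfl⟩
  by_cases hn : n = 1
  · exact Or.inl (by rw [hn]; rfl)
  · exact Or.inr ⟨n, hn, rfl⟩

theorem neil_multiples_dense_general (V : Submodule ℂ L2)
    (hV : V ≤ Submodule.span ℂ {e 0, e 1}) (hVne : V ≠ ⊥)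
    (g : L2) (hgV : g ∈ H2V V) (hout : Outer g) :
    (Submodule.span ℂ {x : L2 | ∃ n : ℕ, n ≠ 1 ∧ x = mulFourier (n : ℤ) g}).topologicalClosure
      = H2V V := by
  change neilMultiples g = H2V V
  have hle : neilMultiples g ≤ H2V V :=
    le_inf (neilMultiples_le_H2 hout) (neilMultiples_le_orthogonal hV hgV)
  refine le_antisymm hle fun h hh => ?_
  obtain ⟨m, hm, _, hc, rfl⟩ := Submodule.mem_sup.mp (H2_le_neilMultiples_sup hout hh.1)
  obtain ⟨c, rfl⟩ := Submodule.mem_span_singleton.mp hc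
  obtain ⟨v, hvV, hv⟩ := exists_inner_mulFourier_one_ne_zero hV hVne hgV hout
  -- `v ⊥ h` and `v ⊥ m` force the coefficient of `e₁ g` to vanish
  have hvh := Submodule.inner_right_of_mem_orthogonal hvV hh.2
  rw [inner_add_right, Submodule.inner_right_of_mem_orthogonal hvV (hle hm).2, zero_add,
    inner_smul_right] at hvh
  rw [(mul_eq_zero.mp hvh).resolve_right hv, zero_smul, add_zero]
  exact hm

/-- if `V` is a nonzero proper subspace of span{e₀,e₁} and `g ∈ H²_V` is outer,
then the multiples of `g` by analytic polynomials with vanishing `e₁`-coefficient (i.e. by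
elements of the Neil algebra) are dense in `H²_V`. -/
theorem neil_multiples_dense (V : Submodule ℂ L2)
    (hV : V ≤ Submodule.span ℂ {e 0, e 1}) (hVne : V ≠ ⊥)
    (hVproper : V ≠ Submodule.span ℂ {e 0, e 1})
    (g : L2) (hgV : g ∈ H2V V) (hout : Outer g) :
    (Submodule.span ℂ {x : L2 | ∃ n : ℕ, n ≠ 1 ∧ x = mulFourier (n : ℤ) g}).topologicalClosure
      = H2V V :=
  neil_multiples_dense_general V hV hVne g hgV hout

end NeilToeplitz
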